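/- arXiv:math/0206012 — 2 statements merged into one kernel-verified Lean document; each statement's English description precedes it below -/
import Mathlib

section
/- Let c' : V'₂ → V'₁ and c'' : V''₂ → V''₁ be linear maps between finite-dimensional complex vector spaces with V'₁ ⊕ V'₂ ≠ 0 and V''₁ ⊕ V''₂ ≠ 0. Define C : Hom(V''₁,V'₁) ⊕ Hom(V''₂,V'₂) → Hom(V''₂,V'₁) by C(ψ₁,ψ₂) = c'∘ψ₂ - ψ₁∘c''. If C is an isomorphism, then exactly one of the following holds: (1) V'₁ = V''₂ = 0 and c' = c'' = 0; (2) V''₁ = 0, V'₁, V'₂, V''₂ are all nonzero, and c' : V'₂ → V'₁ is an isomorphism; (3) V'₂ = 0, V'₁, V''₁, V''₂ are all nonzero, and c'' : V''₂ → V''₁ is an isomorphism. In particular, if all four spaces V'₁, V'₂, V''₁, V''₂ are nonzero then C cannot be an isomorphism. -/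
/-!
Testing `C` on rank-one maps `x ↦ f x • v` shows: if `C` is injective, then `c'` is injective
as soon as `V''₂ ≠ 0` and `c''` is surjective as soon as `V'₁ ≠ 0`; if `C` is surjective, then
`c'` is surjective or `c''` is injective. So when `V'₁ ≠ 0` one of `c'`, `c''` is an isomorphism.
If `c'` is, then `(ψ₁, c'⁻¹ ∘ ψ₁ ∘ c'')` lies in the kernel of `C` for every `ψ₁`, whence
`Hom(V''₁, V'₁) = 0` and `V''₁ = 0`; symmetrically if `c''` is. When `V'₁ = 0` the codomain of
`C` vanishes, so `Hom(V''₂, V'₂) = 0` and `V''₂ = 0`.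
-/

open Function Module LinearMap

lemma nontrivial_or_nontrivial_of_nontrivial_prod {α β : Type*} (h : Nontrivial (α × β)) :
    Nontrivial α ∨ Nontrivial β := by
  by_contra! hne
  obtain ⟨_, _⟩ := hne
  exact not_nontrivial (α × β) h

section Field

variable {K : Type*} [Field K]

lemma subsingleton_or_subsingleton_of_subsingleton_linearMap {M N : Type*} [AddCommGroup M]
    [Module K M] [AddCommGroup N] [Module K N] (h : Subsingleton (M →ₗ[K] N)) :
    Subsingleton M ∨ Subsingleton N := by
  refine or_iff_not_imp_left.2 fun hM => subsingleton_of_forall_eq 0 fun y => ?_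
  have := not_subsingleton_iff_nontrivial.1 hM
  obtain ⟨x, hx⟩ := exists_ne (0 : M)
  obtain ⟨f, hf⟩ := Projective.exists_dual_eq_one K hx
  simpa [hf] using congr($(Subsingleton.elim (f.smulRight y) 0) x)

variable {V'₁ V'₂ V''₁ V''₂ : Type*}
  [AddCommGroup V'₁] [Module K V'₁] [AddCommGroup V'₂] [Module K V'₂]
  [AddCommGroup V''₁] [Module K V''₁] [AddCommGroup V''₂] [Module K V''₂]
  (c' : V'₂ →ₗ[K] V'₁) (c'' : V''₂ →ₗ[K] V''₁)

/-- The map `C` of the generalized Sylvester equation `c' ∘ ψ₂ - ψ₁ ∘ c'' = φ`. -/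
def sylvesterMap : (V''₁ →ₗ[K] V'₁) × (V''₂ →ₗ[K] V'₂) →ₗ[K] (V''₂ →ₗ[K] V'₁) :=
  llcomp K V''₂ V'₂ V'₁ c' ∘ₗ snd K _ _ - lcomp K V'₁ c'' ∘ₗ fst K _ _

@[simp]
lemma sylvesterMap_apply (ψ : (V''₁ →ₗ[K] V'₁) × (V''₂ →ₗ[K] V'₂)) :
    sylvesterMap c' c'' ψ = c' ∘ₗ ψ.2 - ψ.1 ∘ₗ c'' :=
  rfl

variable {c' c''}

lemma injective_of_injective_sylvesterMap [Nontrivial V''₂]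
    (hC : Injective (sylvesterMap c' c'')) : Injective c' := by
  refine (injective_iff_map_eq_zero c').2 fun v hv => ?_
  obtain ⟨x, hx⟩ := exists_ne (0 : V''₂)
  obtain ⟨f, hf⟩ := Projective.exists_dual_eq_one K hx
  have hker := (injective_iff_map_eq_zero _).1 hC (0, f.smulRight v) (by ext; simp [hv])
  simpa [hf] using congr($(congrArg Prod.snd hker) x)

lemma surjective_of_injective_sylvesterMap [Nontrivial V'₁]
    (hC : Injective (sylvesterMap c' c'')) : Surjective c'' := by
  by_contra hc''
  obtain ⟨w, hw⟩ := not_forall.1 hc''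
  obtain ⟨f, hfw, hf⟩ :=
    Submodule.exists_dual_map_eq_bot_of_notMem (mt mem_range.1 hw) inferInstance
  rw [← range_comp, range_eq_bot] at hf
  have hfc'' : ∀ y, f (c'' y) = 0 := LinearMap.congr_fun hf
  obtain ⟨u, hu⟩ := exists_ne (0 : V'₁)
  have hker := (injective_iff_map_eq_zero _).1 hC (f.smulRight u, 0)
    (by ext y; simp [hfc''])
  exact hfw (by simpa [hu] using congr($(congrArg Prod.fst hker) w))

lemma surjective_or_injective_of_surjective_sylvesterMap
    (hC : Surjective (sylvesterMap c' c'')) : Surjective c' ∨ Injective c'' := by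
  refine or_iff_not_imp_left.2 fun hc' => (injective_iff_map_eq_zero c'').2 fun v hv => ?_
  by_contra hv0
  obtain ⟨u, hu⟩ := not_forall.1 hc'
  obtain ⟨f, hf⟩ := Projective.exists_dual_eq_one K hv0
  obtain ⟨ψ, hψ⟩ := hC (f.smulRight u)
  exact hu ⟨ψ.2 v, by simpa [hv, hf] using congr($hψ v)⟩

lemma subsingleton_of_injective_sylvesterMap_of_subsingleton [Subsingleton V'₁]
    [Nontrivial V'₂] (hC : Injective (sylvesterMap c' c'')) : Subsingleton V''₂ :=
  (subsingleton_or_subsingleton_of_subsingleton_linearMap <| subsingleton_of_forall_eq 0 fun ψ₂ =>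
    congrArg Prod.snd <| (injective_iff_map_eq_zero _).1 hC (0, ψ₂) (Subsingleton.elim _ _)
    ).resolve_right (not_subsingleton V'₂)

lemma subsingleton_of_injective_sylvesterMap_of_bijective_left [Nontrivial V'₁]
    (hC : Injective (sylvesterMap c' c'')) (hc' : Bijective c') : Subsingleton V''₁ := by
  let e := LinearEquiv.ofBijective c' hc'
  refine (subsingleton_or_subsingleton_of_subsingleton_linearMap <|
    subsingleton_of_forall_eq 0 fun ψ₁ => congrArg Prod.fst <|
      (injective_iff_map_eq_zero _).1 hC (ψ₁, e.symm ∘ₗ ψ₁ ∘ₗ c'') ?_).resolve_right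
    (not_subsingleton V'₁)
  ext y
  simp [e]

lemma subsingleton_of_injective_sylvesterMap_of_bijective_right [Nontrivial V''₂]
    (hC : Injective (sylvesterMap c' c'')) (hc'' : Bijective c'') : Subsingleton V'₂ := by
  let e := LinearEquiv.ofBijective c'' hc''
  refine (subsingleton_or_subsingleton_of_subsingleton_linearMap <|
    subsingleton_of_forall_eq 0 fun ψ₂ => congrArg Prod.snd <|
      (injective_iff_map_eq_zero _).1 hC (c' ∘ₗ ψ₂ ∘ₗ e.symm, ψ₂) ?_).resolve_left
    (not_subsingleton V''₂)
  ext y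
  simp [e]

end Field

theorem stmt_0_general
    (V'₁ V'₂ V''₁ V''₂ : Type*)
    [AddCommGroup V'₁] [Module ℂ V'₁]
    [AddCommGroup V'₂] [Module ℂ V'₂]
    [AddCommGroup V''₁] [Module ℂ V''₁]
    [AddCommGroup V''₂] [Module ℂ V''₂]
    (h' : Nontrivial (V'₁ × V'₂)) (h'' : Nontrivial (V''₁ × V''₂))
    (c' : V'₂ →ₗ[ℂ] V'₁) (c'' : V''₂ →ₗ[ℂ] V''₁)
    (hC : Function.Bijective
      (fun ψ : (V''₁ →ₗ[ℂ] V'₁) × (V''₂ →ₗ[ℂ] V'₂) =>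
        c'.comp ψ.2 - ψ.1.comp c'')) :
    ((Subsingleton V'₁ ∧ Subsingleton V''₂ ∧ c' = 0 ∧ c'' = 0) ∨
     (Subsingleton V''₁ ∧ Nontrivial V'₁ ∧ Nontrivial V'₂ ∧ Nontrivial V''₂ ∧
        Function.Bijective c') ∨
     (Subsingleton V'₂ ∧ Nontrivial V'₁ ∧ Nontrivial V''₁ ∧ Nontrivial V''₂ ∧
        Function.Bijective c''))
    ∧ (Nontrivial V'₁ → Nontrivial V'₂ → Nontrivial V''₁ → Nontrivial V''₂ → False) := by
  obtain ⟨hinj, hsurj⟩ : Bijective (sylvesterMap c' c'') := hC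
  have alternatives : (Subsingleton V'₁ ∧ Subsingleton V''₂ ∧ c' = 0 ∧ c'' = 0) ∨
      (Subsingleton V''₁ ∧ Nontrivial V'₁ ∧ Nontrivial V'₂ ∧ Nontrivial V''₂ ∧ Bijective c') ∨
      (Subsingleton V'₂ ∧ Nontrivial V'₁ ∧ Nontrivial V''₁ ∧ Nontrivial V''₂ ∧ Bijective c'') := by
    rcases subsingleton_or_nontrivial V'₁ with _ | _
    · have : Nontrivial V'₂ :=
        (nontrivial_or_nontrivial_of_nontrivial_prod h').resolve_left (not_nontrivial V'₁)
      have := subsingleton_of_injective_sylvesterMap_of_subsingleton hinj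
      exact .inl ⟨‹_›, this, Subsingleton.elim _ _, Subsingleton.elim _ _⟩
    have hc''surj := surjective_of_injective_sylvesterMap hinj
    have : Nontrivial V''₂ :=
      (nontrivial_or_nontrivial_of_nontrivial_prod h'').elim (fun _ => hc''surj.nontrivial) id
    have hc'inj := injective_of_injective_sylvesterMap hinj
    rcases surjective_or_injective_of_surjective_sylvesterMap hsurj with hc'surj | hc''inj
    · have hc' : Bijective c' := ⟨hc'inj, hc'surj⟩
      exact .inr <| .inl ⟨subsingleton_of_injective_sylvesterMap_of_bijective_left hinj hc',
        ‹_›, hc'surj.nontrivial, ‹_›, hc'⟩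
    · have hc'' : Bijective c'' := ⟨hc''inj, hc''surj⟩
      exact .inr <| .inr ⟨subsingleton_of_injective_sylvesterMap_of_bijective_right hinj hc'',
        ‹_›, hc''inj.nontrivial, ‹_›, hc''⟩
  refine ⟨alternatives, fun h₁ h₂ h₃ _ => ?_⟩
  rcases alternatives with ⟨_, -⟩ | ⟨_, -⟩ | ⟨_, -⟩
  exacts [not_nontrivial V'₁ h₁, not_nontrivial V''₁ h₃, not_nontrivial V'₂ h₂]

/-- Lemma on linear maps: if `C(ψ₁,ψ₂) = c'∘ψ₂ − ψ₁∘c''` is an isomorphism, then exactly one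
of three alternatives occurs; in particular, if all four spaces are nonzero, `C` cannot be
an isomorphism. -/
theorem stmt_0
    (V'₁ V'₂ V''₁ V''₂ : Type*)
    [AddCommGroup V'₁] [Module ℂ V'₁] [FiniteDimensional ℂ V'₁]
    [AddCommGroup V'₂] [Module ℂ V'₂] [FiniteDimensional ℂ V'₂]
    [AddCommGroup V''₁] [Module ℂ V''₁] [FiniteDimensional ℂ V''₁]
    [AddCommGroup V''₂] [Module ℂ V''₂] [FiniteDimensional ℂ V''₂]
    (h' : Nontrivial (V'₁ × V'₂)) (h'' : Nontrivial (V''₁ × V''₂))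
    (c' : V'₂ →ₗ[ℂ] V'₁) (c'' : V''₂ →ₗ[ℂ] V''₁)
    (hC : Function.Bijective
      (fun ψ : (V''₁ →ₗ[ℂ] V'₁) × (V''₂ →ₗ[ℂ] V'₂) =>
        c'.comp ψ.2 - ψ.1.comp c'')) :
    ((Subsingleton V'₁ ∧ Subsingleton V''₂ ∧ c' = 0 ∧ c'' = 0) ∨
     (Subsingleton V''₁ ∧ Nontrivial V'₁ ∧ Nontrivial V'₂ ∧ Nontrivial V''₂ ∧
        Function.Bijective c') ∨
     (Subsingleton V'₂ ∧ Nontrivial V'₁ ∧ Nontrivial V''₁ ∧ Nontrivial V''₂ ∧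
        Function.Bijective c''))
    ∧ (Nontrivial V'₁ → Nontrivial V'₂ → Nontrivial V''₁ → Nontrivial V''₂ → False) :=
  stmt_0_general V'₁ V'₂ V''₁ V''₂ h' h'' c' c'' hC
end

section
/- Let p ≤ q be positive integers with gcd(p,q) = k, n = p+q, g ≥ 2 an integer, and τ_M = 2p(g−1). Then the number of classes [a,b] ∈ (ℤ⊕ℤ)/(p,q)ℤ with |τ(a,b)| ≤ τ_M, where τ(a,b) = (2/n)(qa−pb), equals 2np(g−1) + k. -/
/-!
Write `p = k p'`, `q = k q'` with `p', q'` coprime and pick `u p' + v q' = 1`. Then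
`(a, b) ↦ (u a + v b mod k, q' a - p' b)` is onto `ℤ/k × ℤ` with kernel generated by `(p, q)`, so it
identifies `(ℤ ⊕ ℤ)/(p, q)ℤ` with `ℤ/k × ℤ`, and `τ = (2k/n) (q' a - p' b)`. The condition
`|τ| ≤ τ_M` reads `|q' a - p' b| ≤ n p' (g - 1)` and constrains only the second factor, which leaves
`k (2 n p' (g - 1) + 1) = 2 n p (g - 1) + k` classes.
-/

open QuotientAddGroup

section BezoutCoordinates

variable {p q u v : ℤ} (k : ℕ)

def bezoutCoordHom (u v p q : ℤ) (k : ℕ) : ℤ × ℤ →+ ZMod k × ℤ :=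
  AddMonoidHom.mk' (fun x ↦ (((u * x.1 + v * x.2 : ℤ) : ZMod k), q * x.1 - p * x.2)) fun x y ↦ by
    simp only [Prod.fst_add, Prod.snd_add, Prod.mk_add_mk, Prod.mk.injEq]
    constructor
    · push_cast; ring
    · ring

@[simp]
theorem bezoutCoordHom_apply (a b : ℤ) :
    bezoutCoordHom u v p q k (a, b) = (((u * a + v * b : ℤ) : ZMod k), q * a - p * b) := rfl

variable (h : u * p + v * q = 1)
include h

theorem bezoutCoordHom_surjective : Function.Surjective (bezoutCoordHom u v p q k) := by
  rintro ⟨r, t⟩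
  refine ⟨(r.cast * p + t * v, r.cast * q - t * u), ?_⟩
  simp only [bezoutCoordHom_apply, Prod.mk.injEq]
  constructor
  · rw [show u * (r.cast * p + t * v) + v * (r.cast * q - t * u) = r.cast * (u * p + v * q) by ring,
      h, mul_one, ZMod.intCast_cast, ZMod.cast_id]
  · linear_combination t * h

theorem ker_bezoutCoordHom :
    (bezoutCoordHom u v p q k).ker = AddSubgroup.zmultiples (p * k, q * k) := by
  ext ⟨a, b⟩
  simp only [AddMonoidHom.mem_ker, bezoutCoordHom_apply, Prod.mk_eq_zero,
    AddSubgroup.mem_zmultiples_iff, ZMod.intCast_zmod_eq_zero_iff_dvd, sub_eq_zero, Prod.smul_mk,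
    smul_eq_mul, Prod.mk.injEq]
  constructor
  · rintro ⟨⟨c, hc⟩, hab⟩
    refine ⟨c, ?_, ?_⟩
    · linear_combination a * h - p * hc - v * hab
    · linear_combination b * h - q * hc + u * hab
  · rintro ⟨c, rfl, rfl⟩
    exact ⟨⟨c, by linear_combination c * k * h⟩, by ring⟩

noncomputable def quotientZMultiplesEquiv :
    (ℤ × ℤ) ⧸ AddSubgroup.zmultiples (p * k, q * k) ≃+ ZMod k × ℤ :=
  (quotientAddEquivOfEq (ker_bezoutCoordHom k h).symm).trans
    (quotientKerEquivOfSurjective _ (bezoutCoordHom_surjective k h))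

theorem quotientZMultiplesEquiv_mk_snd (a b : ℤ) :
    (quotientZMultiplesEquiv k h (mk (a, b))).2 = q * a - p * b := rfl

end BezoutCoordinates

theorem ncard_setOf_abs_snd_le (k M : ℕ) :
    {x : ZMod k × ℤ | |x.2| ≤ M}.ncard = k * (2 * M + 1) := by
  have hIcc : {x : ZMod k × ℤ | |x.2| ≤ M} = Set.univ ×ˢ ↑(Finset.Icc (-(M : ℤ)) M) := by
    ext x
    simp [abs_le]
  rw [hIcc, Set.ncard_prod, Set.ncard_univ, Nat.card_zmod, Set.ncard_coe_finset, Int.card_Icc]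
  congr 1
  omega

theorem abs_two_mul_div_le_iff (k n p g : ℕ) (hk : 0 < k) (hn : 0 < n) (hg : 1 ≤ g) (X : ℤ) :
    |2 * ((k : ℚ) * X) / n| ≤ 2 * ((k : ℚ) * p) * ((g : ℚ) - 1) ↔
      |X| ≤ ((n * p * (g - 1) : ℕ) : ℤ) := by
  have hk' : (0 : ℚ) < 2 * k := by positivity
  have hn' : (0 : ℚ) < n := by exact_mod_cast hn
  rw [abs_div, abs_mul, abs_mul, abs_two, Nat.abs_cast, Nat.abs_cast, div_le_iff₀ hn', ← mul_assoc,
    show 2 * ((k : ℚ) * p) * (g - 1) * n = 2 * k * (n * p * (g - 1)) by ring,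
    mul_le_mul_iff_right₀ hk']
  push_cast [Nat.cast_sub hg]
  exact_mod_cast Iff.rfl

theorem stmt_5_general (p q k n g : ℕ) (hp : 0 < p) (hk : Nat.gcd p q = k)
    (hn : n = p + q) (hg : 2 ≤ g) :
    Set.ncard {x : (ℤ × ℤ) ⧸ AddSubgroup.zmultiples ((p : ℤ), (q : ℤ)) |
        ∃ a b : ℤ, QuotientAddGroup.mk (a, b) = x ∧
          |2 * ((q : ℚ) * a - (p : ℚ) * b) / (n : ℚ)| ≤ 2 * (p : ℚ) * ((g : ℚ) - 1)}
      = 2 * n * p * (g - 1) + k := by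
  have hk0 : 0 < k := hk ▸ Nat.gcd_pos_of_pos_left q hp
  obtain ⟨p', q', hcop, rfl, rfl⟩ := hk ▸ Nat.exists_coprime p q
  obtain ⟨u, v, h⟩ := Nat.isCoprime_iff_coprime.mpr hcop
  subst hn
  rw [Nat.cast_mul, Nat.cast_mul]
  set M := (p' * k + q' * k) * p' * (g - 1)
  set e := quotientZMultiplesEquiv k h
  have hcond (a b : ℤ) :
      |2 * (((q' * k : ℕ) : ℚ) * a - ((p' * k : ℕ) : ℚ) * b) / ((p' * k + q' * k : ℕ) : ℚ)| ≤
        2 * ((p' * k : ℕ) : ℚ) * ((g : ℚ) - 1) ↔ |(e (mk (a, b))).2| ≤ M := by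
    rw [quotientZMultiplesEquiv_mk_snd,
      ← abs_two_mul_div_le_iff k _ p' g hk0 (by positivity) (by omega)]
    push_cast
    ring_nf
  calc _ = (e ⁻¹' {y | |y.2| ≤ M}).ncard := by
        congr 1
        ext x
        obtain ⟨⟨a, b⟩, rfl⟩ := mk_surjective x
        refine ⟨fun ⟨a', b', hab, hc⟩ ↦ ?_, fun hc ↦ ⟨a, b, rfl, (hcond a b).2 hc⟩⟩
        rw [Set.mem_preimage, ← hab]
        exact (hcond a' b').1 hc
    _ = k * (2 * M + 1) := by
        rw [Set.ncard_preimage_of_injective_subset_range e.injective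
          (e.surjective.range_eq ▸ Set.subset_univ _), ncard_setOf_abs_snd_le]
    _ = _ := by ring

/-- The number of classes `[a,b] ∈ (ℤ⊕ℤ)/(p,q)ℤ` with `|τ(a,b)| ≤ τ_M = 2p(g−1)` equals
`2np(g−1) + k`, where `n = p+q` and `k = gcd(p,q)`. -/
theorem stmt_5 (p q k n g : ℕ) (hp : 0 < p) (hpq : p ≤ q) (hk : Nat.gcd p q = k)
    (hn : n = p + q) (hg : 2 ≤ g) :
    Set.ncard {x : (ℤ × ℤ) ⧸ AddSubgroup.zmultiples ((p : ℤ), (q : ℤ)) |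
        ∃ a b : ℤ, QuotientAddGroup.mk (a, b) = x ∧
          |2 * ((q : ℚ) * a - (p : ℚ) * b) / (n : ℚ)| ≤ 2 * (p : ℚ) * ((g : ℚ) - 1)}
      = 2 * n * p * (g - 1) + k :=
  stmt_5_general p q k n g hp hk hn hg
end
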